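/- Variance of the positive random feature kernel estimator is finite and given by Gaussian moments: for fixed x, x' ∈ ℝ^d and w ~ N(0, I_d), the second moment E[(exp(−‖x‖²/2 − ‖x'‖²/2) exp(wᵀ(x + x')))²] = exp(2‖x + x'‖² − ‖x‖² − ‖x'‖²), hence the single-sample estimator of exp(xᵀx') has variance exp(2‖x+x'‖² − ‖x‖² − ‖x'‖²) − exp(2 xᵀx'). -/

import Mathlib

/-!
Both moments are Gaussian moment generating functions: `Z² = exp(−‖x‖² − ‖x'‖²) exp(wᵀ(2(x + x')))`,
and for a standard Gaussian vector `E[exp(wᵀc)] = exp(‖c‖²/2)` factorizes over the independent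
coordinates. The rest is the polarization identity `‖x + x'‖² = ‖x‖² + ‖x'‖² + 2 xᵀx'`.
-/

open MeasureTheory ProbabilityTheory
open scoped NNReal

theorem integral_exp_mul_gaussianReal (μ : ℝ) (v : ℝ≥0) (t : ℝ) :
    ∫ y, Real.exp (y * t) ∂gaussianReal μ v = Real.exp (μ * t + v * t ^ 2 / 2) := by
  rw [← mgf_gaussianReal Measure.map_id t, mgf]
  simp only [id, mul_comm t]

theorem integral_exp_sum_mul_pi_gaussianReal {ι : Type*} [Fintype ι] (μ : ι → ℝ)
    (v : ι → ℝ≥0) (c : ι → ℝ) :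
    ∫ w, Real.exp (∑ i, w i * c i) ∂Measure.pi (fun i => gaussianReal (μ i) (v i)) =
      Real.exp (∑ i, (μ i * c i + v i * c i ^ 2 / 2)) := by
  simp_rw [Real.exp_sum]
  rw [integral_fintype_prod_eq_prod (fun i y => Real.exp (y * c i))]
  simp_rw [integral_exp_mul_gaussianReal]

theorem integral_exp_sum_mul_pi_stdGaussian {ι : Type*} [Fintype ι] (c : ι → ℝ) :
    ∫ w, Real.exp (∑ i, w i * c i) ∂Measure.pi (fun _ : ι => gaussianReal 0 1) =
      Real.exp ((∑ i, c i ^ 2) / 2) := by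
  rw [integral_exp_sum_mul_pi_gaussianReal, Finset.sum_div]
  simp

/-- Second moment and variance of the single-sample positive random feature estimator
`Z = exp(−‖x‖²/2 − ‖x'‖²/2) exp(wᵀ(x+x'))` of `exp(xᵀx')`:
`E[Z²] = exp(2‖x+x'‖² − ‖x‖² − ‖x'‖²)` and
`Var[Z] = E[Z²] − (E[Z])² = exp(2‖x+x'‖² − ‖x‖² − ‖x'‖²) − exp(2 xᵀx')`. -/
theorem prf_second_moment_and_variance (d : ℕ) (x x' : Fin d → ℝ) :
    (∫ w, (Real.exp (-(∑ i, x i ^ 2) / 2 - (∑ i, x' i ^ 2) / 2) *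
            Real.exp (∑ i, w i * (x i + x' i))) ^ 2
        ∂(Measure.pi fun _ : Fin d => gaussianReal 0 1) =
      Real.exp (2 * (∑ i, (x i + x' i) ^ 2) - (∑ i, x i ^ 2) - (∑ i, x' i ^ 2))) ∧
    (∫ w, (Real.exp (-(∑ i, x i ^ 2) / 2 - (∑ i, x' i ^ 2) / 2) *
            Real.exp (∑ i, w i * (x i + x' i))) ^ 2
        ∂(Measure.pi fun _ : Fin d => gaussianReal 0 1)) -
      (∫ w, Real.exp (-(∑ i, x i ^ 2) / 2 - (∑ i, x' i ^ 2) / 2) *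
            Real.exp (∑ i, w i * (x i + x' i))
        ∂(Measure.pi fun _ : Fin d => gaussianReal 0 1)) ^ 2 =
      Real.exp (2 * (∑ i, (x i + x' i) ^ 2) - (∑ i, x i ^ 2) - (∑ i, x' i ^ 2)) -
        Real.exp (2 * ∑ i, x i * x' i) := by
  set a := -(∑ i, x i ^ 2) / 2 - (∑ i, x' i ^ 2) / 2 with ha
  have h_sq (w : Fin d → ℝ) : (Real.exp a * Real.exp (∑ i, w i * (x i + x' i))) ^ 2 =
      Real.exp (2 * a) * Real.exp (∑ i, w i * (2 * (x i + x' i))) := by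
    simp only [mul_pow, ← Real.exp_nat_mul, Finset.mul_sum]
    ring_nf
  have h_second : ∫ w, (Real.exp a * Real.exp (∑ i, w i * (x i + x' i))) ^ 2
        ∂(Measure.pi fun _ : Fin d => gaussianReal 0 1) =
      Real.exp (2 * (∑ i, (x i + x' i) ^ 2) - (∑ i, x i ^ 2) - (∑ i, x' i ^ 2)) := by
    simp_rw [h_sq, integral_const_mul, integral_exp_sum_mul_pi_stdGaussian, ← Real.exp_add]
    congr 1
    simp only [mul_pow, ← Finset.mul_sum]
    ring
  have h_first : (∫ w, Real.exp a * Real.exp (∑ i, w i * (x i + x' i))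
        ∂(Measure.pi fun _ : Fin d => gaussianReal 0 1)) ^ 2 =
      Real.exp (2 * ∑ i, x i * x' i) := by
    rw [integral_const_mul, integral_exp_sum_mul_pi_stdGaussian, ← Real.exp_add,
      ← Real.exp_nat_mul]
    congr 1
    simp only [ha, add_sq, Finset.sum_add_distrib, mul_assoc, ← Finset.mul_sum]
    push_cast
    ring
  exact ⟨h_second, by rw [h_second, h_first]⟩
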